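/- Let f : S → E be a strictly increasing function from a set of epsilon numbers into the epsilon numbers, and let x be an ordinal with Ep(x) ⊆ S. Then the inverse function f⁻¹ : range(f) → S exists, is strictly increasing, and (x[f])[f⁻¹] = x. -/

import Mathlib

open Ordinal

/-- An ordinal is an epsilon number if it is a fixed point of `ω ^ ·`. -/
def IsEpsilon (x : Ordinal.{0}) : Prop := ω ^ x = x

theorem cnf_fst_lt {x : Ordinal.{0}} (h : ¬ ω ^ x = x) {p : Ordinal × Ordinal}
    (hp : p ∈ CNF ω x) : p.1 < x := by
  have hx : x ≠ 0 := by
    rintro rfl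
    simp [Ordinal.CNF.zero_right] at hp
  have h1 : p.1 ≤ Ordinal.log ω x := Ordinal.CNF.fst_le_log hp
  have h2 : Ordinal.log ω x < x := by
    rcases lt_or_eq_of_le (Ordinal.log_le_self ω x) with h' | h'
    · exact h'
    · exfalso
      have hle := Ordinal.opow_log_le_self ω hx
      rw [h'] at hle
      exact h (le_antisymm hle (Ordinal.right_le_opow x one_lt_omega0))
  exact lt_of_le_of_lt h1 h2

open scoped Classical in
/-- The set of epsilon numbers occurring hereditarily in the Cantor normal form of `x`. -/
noncomputable def Ep (x : Ordinal.{0}) : Set Ordinal.{0} :=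
  if h : ω ^ x = x then {x}
  else ⋃ p : {q // q ∈ CNF ω x}, Ep p.1.1
termination_by x
decreasing_by exact cnf_fst_lt h p.2

open scoped Classical in
/-- Simultaneous substitution of the epsilon numbers occurring hereditarily in the
Cantor normal form of `x` by their values under `f`. -/
noncomputable def subst (f : Ordinal.{0} → Ordinal.{0}) (x : Ordinal.{0}) : Ordinal.{0} :=
  if h : ω ^ x = x then f x
  else (((CNF ω x).attach).map (fun p => ω ^ subst f p.1.1 * p.1.2)).sum
termination_by x
decreasing_by exact cnf_fst_lt h p.2

/-!
Write `x[f]` for `subst f x`. If `x = ω ^ e₁ * c₁ + ⋯ + ω ^ eₖ * cₖ` is the Cantor normal form,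
then `x[f] = ω ^ e₁[f] * c₁ + ⋯ + ω ^ eₖ[f] * cₖ`; this holds also for an epsilon number
`x = ω ^ x * 1`, because `f x` is again one. A well-founded induction, using that `f` is strictly
increasing, shows that `x ↦ x[f]` is strictly increasing and sends ordinals below `ω ^ a` below
`ω ^ a[f]`. Hence the exponents `eᵢ[f]` still decrease, the sum above is the Cantor normal form
of `x[f]`, and substituting with `f⁻¹` undoes the substitution term by term.
-/

open Order

theorem StrictMonoOn.strictMonoOn_invFunOn {α β : Type*} [LinearOrder α] [Preorder β]
    [Nonempty α] {f : α → β} {s : Set α} (hf : StrictMonoOn f s) :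
    StrictMonoOn (Function.invFunOn f s) (f '' s) := by
  rintro _ ⟨a, ha, rfl⟩ _ ⟨b, hb, rfl⟩ hab
  rw [hf.injOn.leftInvOn_invFunOn ha, hf.injOn.leftInvOn_invFunOn hb]
  exact (hf.lt_iff_lt ha hb).1 hab

theorem Ordinal.CNF.sum_map_opow_mul (b o : Ordinal) :
    ((CNF b o).map fun p => b ^ p.1 * p.2).sum = o := by
  rw [List.sum_eq_foldr, List.foldr_map]
  exact CNF.foldr b o

section

variable {x y : Ordinal.{0}}

theorem not_isEpsilon_zero : ¬ IsEpsilon 0 := by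
  simp [IsEpsilon]

theorem IsEpsilon.pos (h : IsEpsilon x) : 0 < x := by
  rw [← h]
  exact opow_pos x omega0_pos

theorem IsEpsilon.log_eq (h : IsEpsilon x) : log ω x = x := by
  conv_lhs => rw [← h]
  exact log_opow one_lt_omega0 x

theorem IsEpsilon.CNF_eq (h : IsEpsilon x) : CNF ω x = [(x, 1)] := by
  rw [CNF.ne_zero h.pos.ne', h.log_eq, h, div_self h.pos.ne', mod_self, CNF.zero_right]

theorem log_lt_self_of_not_isEpsilon (hx : ¬ IsEpsilon x) (hx0 : x ≠ 0) : log ω x < x :=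
  cnf_fst_lt hx (p := (log ω x, x / ω ^ log ω x))
    (by rw [CNF.ne_zero hx0]; exact List.mem_cons_self)

theorem Ep_of_isEpsilon (h : IsEpsilon x) : Ep x = {x} := by
  rw [Ep, dif_pos (show ω ^ x = x from h)]

theorem Ep_eq_biUnion_CNF (x : Ordinal.{0}) : Ep x = ⋃ p ∈ CNF ω x, Ep p.1 := by
  by_cases h : IsEpsilon x
  · simp [h.CNF_eq, Ep_of_isEpsilon h]
  · rw [Ep, dif_neg (show ¬ ω ^ x = x from h)]
    ext
    simp

theorem Ep_fst_subset_of_mem_CNF {p : Ordinal × Ordinal} (hp : p ∈ CNF ω x) :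
    Ep p.1 ⊆ Ep x := by
  rw [Ep_eq_biUnion_CNF x]
  exact Set.subset_biUnion_of_mem (u := fun p : Ordinal × Ordinal => Ep p.1) hp

theorem Ep_log_subset (x : Ordinal.{0}) : Ep (log ω x) ⊆ Ep x := by
  rcases eq_or_ne x 0 with rfl | hx0
  · rw [log_zero_right]
  · exact Ep_fst_subset_of_mem_CNF (p := (log ω x, x / ω ^ log ω x))
      (by rw [CNF.ne_zero hx0]; exact List.mem_cons_self)

theorem Ep_mod_subset (x : Ordinal.{0}) : Ep (x % ω ^ log ω x) ⊆ Ep x := by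
  rcases eq_or_ne x 0 with rfl | hx0
  · rw [zero_mod]
  · rw [Ep_eq_biUnion_CNF x, Ep_eq_biUnion_CNF, CNF.ne_zero hx0]
    exact Set.biUnion_subset_biUnion_left fun p hp => List.mem_cons_of_mem _ hp

theorem mem_of_Ep_subset {S : Set Ordinal.{0}} (h : IsEpsilon x) (hxS : Ep x ⊆ S) : x ∈ S :=
  hxS (by rw [Ep_of_isEpsilon h]; rfl)

theorem subst_of_isEpsilon (f : Ordinal.{0} → Ordinal.{0}) (h : IsEpsilon x) :
    subst f x = f x := by
  rw [subst, dif_pos (show ω ^ x = x from h)]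

theorem subst_of_not_isEpsilon (f : Ordinal.{0} → Ordinal.{0}) (h : ¬ IsEpsilon x) :
    subst f x = ((CNF ω x).map fun p => ω ^ subst f p.1 * p.2).sum := by
  rw [subst, dif_neg (show ¬ ω ^ x = x from h)]
  exact congrArg List.sum
    (List.attach_map_val (f := fun p : Ordinal × Ordinal => ω ^ subst f p.1 * p.2))

theorem subst_zero (f : Ordinal.{0} → Ordinal.{0}) : subst f 0 = 0 := by
  rw [subst_of_not_isEpsilon f not_isEpsilon_zero, CNF.zero_right, List.map_nil, List.sum_nil]

variable {S : Set Ordinal.{0}} {f : Ordinal.{0} → Ordinal.{0}}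

theorem subst_eq_sum_CNF (hfE : ∀ e ∈ S, IsEpsilon (f e)) (hxS : Ep x ⊆ S) :
    subst f x = ((CNF ω x).map fun p => ω ^ subst f p.1 * p.2).sum := by
  by_cases h : IsEpsilon x
  · have hfx : ω ^ f x = f x := hfE x (mem_of_Ep_subset h hxS)
    simp [h.CNF_eq, subst_of_isEpsilon f h, hfx]
  · exact subst_of_not_isEpsilon f h

theorem subst_eq_opow_mul_add (hfE : ∀ e ∈ S, IsEpsilon (f e)) (hxS : Ep x ⊆ S)
    (hx0 : x ≠ 0) :
    subst f x = ω ^ subst f (log ω x) * (x / ω ^ log ω x) + subst f (x % ω ^ log ω x) := by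
  rw [subst_eq_sum_CNF hfE hxS, CNF.ne_zero hx0, List.map_cons, List.sum_cons,
    subst_eq_sum_CNF hfE ((Ep_mod_subset x).trans hxS)]

theorem opow_subst_log_le_subst (hfE : ∀ e ∈ S, IsEpsilon (f e)) (hxS : Ep x ⊆ S)
    (hx0 : x ≠ 0) : ω ^ subst f (log ω x) ≤ subst f x := by
  rw [subst_eq_opow_mul_add hfE hxS hx0]
  exact (le_mul_left _ (div_opow_log_pos ω hx0)).trans le_self_add

theorem subst_lt_opow_succ (hfE : ∀ e ∈ S, IsEpsilon (f e)) (hxS : Ep x ⊆ S) (hx0 : x ≠ 0)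
    (hbound : ∀ z, Ep z ⊆ S → z < ω ^ log ω x → subst f z < ω ^ subst f (log ω x)) :
    subst f x < ω ^ succ (subst f (log ω x)) := by
  rw [subst_eq_opow_mul_add hfE hxS hx0]
  exact opow_mul_add_lt_opow (div_opow_log_lt x one_lt_omega0)
    (hbound _ ((Ep_mod_subset x).trans hxS) (mod_lt x (opow_ne_zero _ omega0_ne_zero)))
    (lt_succ _)

theorem subst_lt_opow_subst_of_forall_lt (hfE : ∀ e ∈ S, IsEpsilon (f e)) {a : Ordinal.{0}}
    (hmono : ∀ b < a, Ep b ⊆ S → subst f b < subst f a)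
    (hbound : ∀ b < a, Ep b ⊆ S → ∀ z, Ep z ⊆ S → z < ω ^ b → subst f z < ω ^ subst f b)
    (hyS : Ep y ⊆ S) (hy : y < ω ^ a) : subst f y < ω ^ subst f a := by
  rcases eq_or_ne y 0 with rfl | hy0
  · rw [subst_zero]
    exact opow_pos _ omega0_pos
  have hlog : log ω y < a := (lt_opow_iff_log_lt one_lt_omega0 hy0).1 hy
  have hlogS : Ep (log ω y) ⊆ S := (Ep_log_subset y).trans hyS
  calc subst f y < ω ^ succ (subst f (log ω y)) :=
        subst_lt_opow_succ hfE hyS hy0 (hbound _ hlog hlogS)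
    _ ≤ ω ^ subst f a :=
        opow_le_opow_right omega0_pos (succ_le_of_lt (hmono _ hlog hlogS))

theorem subst_lt_subst_of_isEpsilon (hfE : ∀ e ∈ S, IsEpsilon (f e)) (hf : StrictMonoOn f S)
    {a : Ordinal.{0}} (ha : IsEpsilon a) (haS : Ep a ⊆ S)
    (hbound : ∀ b < a, Ep b ⊆ S → ∀ z, Ep z ⊆ S → z < ω ^ b → subst f z < ω ^ subst f b) :
    ∀ x < a, Ep x ⊆ S → subst f x < subst f a := by
  have haS' : a ∈ S := mem_of_Ep_subset ha haS
  have hfa : ω ^ f a = f a := hfE a haS'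
  rw [subst_of_isEpsilon f ha]
  -- `log ω a = a`, so the induction on `a` says nothing about `log ω x` versus `a`.
  intro x
  induction x using WellFoundedLT.induction with | _ x IH => ?_
  intro hxa hxS
  by_cases hx : IsEpsilon x
  · rw [subst_of_isEpsilon f hx]
    exact hf (mem_of_Ep_subset hx hxS) haS' hxa
  rcases eq_or_ne x 0 with rfl | hx0
  · rw [subst_zero, ← hfa]
    exact opow_pos _ omega0_pos
  have hlog : log ω x < x := log_lt_self_of_not_isEpsilon hx hx0
  have hlogS : Ep (log ω x) ⊆ S := (Ep_log_subset x).trans hxS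
  calc subst f x < ω ^ succ (subst f (log ω x)) :=
        subst_lt_opow_succ hfE hxS hx0 (hbound _ (hlog.trans hxa) hlogS)
    _ ≤ ω ^ f a :=
        opow_le_opow_right omega0_pos (succ_le_of_lt (IH _ hlog (hlog.trans hxa) hlogS))
    _ = f a := hfa

theorem subst_lt_subst_of_lt (hfE : ∀ e ∈ S, IsEpsilon (f e)) (hxS : Ep x ⊆ S)
    (hyS : Ep y ⊆ S) (hxy : x < y)
    (hbound : ∀ z, Ep z ⊆ S → z < ω ^ log ω x → subst f z < ω ^ subst f (log ω x))
    (hlog : ∀ b < log ω y, Ep b ⊆ S → subst f b < subst f (log ω y))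
    (hrem : ∀ r < y % ω ^ log ω y, Ep r ⊆ S → subst f r < subst f (y % ω ^ log ω y)) :
    subst f x < subst f y := by
  have hy0 : y ≠ 0 := hxy.ne_bot
  have hy : ω ^ subst f (log ω y) ≤ subst f y := opow_subst_log_le_subst hfE hyS hy0
  rcases eq_or_ne x 0 with rfl | hx0
  · rw [subst_zero]
    exact (opow_pos _ omega0_pos).trans_le hy
  rcases (log_mono_right ω hxy.le).lt_or_eq with hlt | heq
  · calc subst f x < ω ^ succ (subst f (log ω x)) := subst_lt_opow_succ hfE hxS hx0 hbound
      _ ≤ ω ^ subst f (log ω y) := opow_le_opow_right omega0_pos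
          (succ_le_of_lt (hlog _ hlt ((Ep_log_subset x).trans hxS)))
      _ ≤ subst f y := hy
  have hxrS : Ep (x % ω ^ log ω y) ⊆ S := heq ▸ (Ep_mod_subset x).trans hxS
  rw [heq] at hbound
  rw [subst_eq_opow_mul_add hfE hxS hx0, subst_eq_opow_mul_add hfE hyS hy0, heq]
  set e := log ω y
  rcases (div_le_left hxy.le (ω ^ e)).lt_or_eq with hc | hc
  · calc ω ^ subst f e * (x / ω ^ e) + subst f (x % ω ^ e)
        < ω ^ subst f e * succ (x / ω ^ e) :=
          opow_mul_add_lt_opow_mul (hbound _ hxrS (mod_lt x (opow_ne_zero _ omega0_ne_zero)))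
            (lt_succ _)
      _ ≤ ω ^ subst f e * (y / ω ^ e) := mul_le_mul_right (succ_le_of_lt hc) _
      _ ≤ _ := le_self_add
  · have hr : x % ω ^ e < y % ω ^ e := by
      refine lt_of_add_lt_add_left (a := ω ^ e * (y / ω ^ e)) ?_
      calc ω ^ e * (y / ω ^ e) + x % ω ^ e = x := by rw [← hc, div_add_mod]
        _ < y := hxy
        _ = ω ^ e * (y / ω ^ e) + y % ω ^ e := (div_add_mod y _).symm
    rw [hc]
    exact (add_lt_add_iff_left _).2 (hrem _ hr hxrS)

theorem subst_lt_subst_and_lt_opow (hfE : ∀ e ∈ S, IsEpsilon (f e)) (hf : StrictMonoOn f S)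
    (a : Ordinal.{0}) (haS : Ep a ⊆ S) :
    (∀ x < a, Ep x ⊆ S → subst f x < subst f a) ∧
      ∀ y, Ep y ⊆ S → y < ω ^ a → subst f y < ω ^ subst f a := by
  induction a using WellFoundedLT.induction with | _ a IH => ?_
  have hbound : ∀ b < a, Ep b ⊆ S → ∀ z, Ep z ⊆ S → z < ω ^ b → subst f z < ω ^ subst f b :=
    fun b hb hbS => (IH b hb hbS).2
  have hmono : ∀ x < a, Ep x ⊆ S → subst f x < subst f a := by
    by_cases ha : IsEpsilon a
    · exact subst_lt_subst_of_isEpsilon hfE hf ha haS hbound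
    intro x hxa hxS
    have ha0 : a ≠ 0 := hxa.ne_bot
    exact subst_lt_subst_of_lt hfE hxS haS hxa
      (hbound _ ((log_le_self ω x).trans_lt hxa) ((Ep_log_subset x).trans hxS))
      (IH _ (log_lt_self_of_not_isEpsilon ha ha0) ((Ep_log_subset a).trans haS)).1
      (IH _ (mod_opow_log_lt_self ω ha0) ((Ep_mod_subset a).trans haS)).1
  exact ⟨hmono, fun y hyS hy => subst_lt_opow_subst_of_forall_lt hfE hmono hbound hyS hy⟩

theorem subst_strictMonoOn (hfE : ∀ e ∈ S, IsEpsilon (f e)) (hf : StrictMonoOn f S) :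
    StrictMonoOn (subst f) {x | Ep x ⊆ S} :=
  fun x hxS y hyS hxy => (subst_lt_subst_and_lt_opow hfE hf y hyS).1 x hxy hxS

theorem subst_mod_opow_log_lt (hfE : ∀ e ∈ S, IsEpsilon (f e)) (hf : StrictMonoOn f S)
    (hxS : Ep x ⊆ S) : subst f (x % ω ^ log ω x) < ω ^ subst f (log ω x) :=
  (subst_lt_subst_and_lt_opow hfE hf _ ((Ep_log_subset x).trans hxS)).2 _
    ((Ep_mod_subset x).trans hxS) (mod_lt x (opow_ne_zero _ omega0_ne_zero))

theorem log_subst (hfE : ∀ e ∈ S, IsEpsilon (f e)) (hf : StrictMonoOn f S) (hxS : Ep x ⊆ S) :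
    log ω (subst f x) = subst f (log ω x) := by
  rcases eq_or_ne x 0 with rfl | hx0
  · rw [subst_zero, log_zero_right, subst_zero]
  rw [subst_eq_opow_mul_add hfE hxS hx0,
    log_opow_mul_add one_lt_omega0 (div_opow_log_pos ω hx0).ne'
      (subst_mod_opow_log_lt hfE hf hxS),
    log_eq_zero (div_opow_log_lt x one_lt_omega0), add_zero]

theorem not_isEpsilon_subst (hfE : ∀ e ∈ S, IsEpsilon (f e)) (hf : StrictMonoOn f S)
    (hxS : Ep x ⊆ S) (hx : ¬ IsEpsilon x) : ¬ IsEpsilon (subst f x) := by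
  rcases eq_or_ne x 0 with rfl | hx0
  · rw [subst_zero]
    exact not_isEpsilon_zero
  intro h
  have hlt : subst f (log ω x) < subst f x := subst_strictMonoOn hfE hf
    ((Ep_log_subset x).trans hxS) hxS (log_lt_self_of_not_isEpsilon hx hx0)
  exact hlt.ne' (h.log_eq.symm.trans (log_subst hfE hf hxS))

theorem CNF_subst (hfE : ∀ e ∈ S, IsEpsilon (f e)) (hf : StrictMonoOn f S)
    (hxS : Ep x ⊆ S) :
    CNF ω (subst f x) = (CNF ω x).map (Prod.map (subst f) id) := by
  induction x using WellFoundedLT.induction with | _ x IH => ?_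
  rcases eq_or_ne x 0 with rfl | hx0
  · rw [subst_zero, CNF.zero_right, List.map_nil]
  have hrS : Ep (x % ω ^ log ω x) ⊆ S := (Ep_mod_subset x).trans hxS
  rw [subst_eq_opow_mul_add hfE hxS hx0,
    CNF.opow_mul_add one_lt_omega0 (div_opow_log_pos ω hx0).ne'
      (div_opow_log_lt x one_lt_omega0) (subst_mod_opow_log_lt hfE hf hxS),
    IH _ (mod_opow_log_lt_self ω hx0) hrS, CNF.ne_zero hx0, List.map_cons]
  rfl

theorem subst_subst_of_leftInvOn (hfE : ∀ e ∈ S, IsEpsilon (f e)) (hf : StrictMonoOn f S)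
    {g : Ordinal.{0} → Ordinal.{0}} (hg : ∀ e ∈ S, g (f e) = e) (hxS : Ep x ⊆ S) :
    subst g (subst f x) = x := by
  induction x using WellFoundedLT.induction with | _ x IH => ?_
  by_cases hx : IsEpsilon x
  · have hxS' : x ∈ S := mem_of_Ep_subset hx hxS
    rw [subst_of_isEpsilon f hx, subst_of_isEpsilon g (hfE x hxS'), hg x hxS']
  rw [subst_of_not_isEpsilon g (not_isEpsilon_subst hfE hf hxS hx), CNF_subst hfE hf hxS,
    List.map_map]
  conv_rhs => rw [← CNF.sum_map_opow_mul ω x]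
  refine congrArg List.sum (List.map_congr_left fun p hp => ?_)
  simp only [Function.comp_apply, Prod.map_fst, Prod.map_snd, id]
  rw [IH p.1 (cnf_fst_lt hx hp) ((Ep_fst_subset_of_mem_CNF hp).trans hxS)]

end

theorem stmt4_general (S : Set Ordinal.{0}) (f : Ordinal → Ordinal)
    (hfE : ∀ e ∈ S, IsEpsilon (f e))
    (hf : StrictMonoOn f S)
    (x : Ordinal) (hx : Ep x ⊆ S) :
    ∃ g : Ordinal → Ordinal, (∀ e ∈ S, g (f e) = e) ∧
      StrictMonoOn g (f '' S) ∧ subst g (subst f x) = x := by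
  have hg : ∀ e ∈ S, Function.invFunOn f S (f e) = e := fun e he =>
    hf.injOn.leftInvOn_invFunOn he
  exact ⟨Function.invFunOn f S, hg, hf.strictMonoOn_invFunOn,
    subst_subst_of_leftInvOn hfE hf hg hx⟩

theorem stmt4 (S : Set Ordinal.{0}) (f : Ordinal → Ordinal)
    (hS : ∀ e ∈ S, IsEpsilon e) (hfE : ∀ e ∈ S, IsEpsilon (f e))
    (hf : StrictMonoOn f S)
    (x : Ordinal) (hx : Ep x ⊆ S) :
    ∃ g : Ordinal → Ordinal, (∀ e ∈ S, g (f e) = e) ∧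
      StrictMonoOn g (f '' S) ∧ subst g (subst f x) = x :=
  stmt4_general S f hfE hf x hx
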